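/- arXiv:1507.02074 — 2 statements merged into one kernel-verified Lean document; each statement's English description precedes it below -/
import Mathlib

section
/- Fix κ ∈ (0,1), ξ > 1, 1 ≤ η < ξ, C > 0 and constants 0 < c₁' ≤ c₁ < ∞, c₂ > 0. Let (p_n) be positive integers with p_n/n → κ, let (φ_n) be positive integers with 1 ≤ φ_n ≤ p_n, φ_n → ∞ and (φ_n log n)/n → 0, and let δ_{1,n}, δ_{2,n} > 0 satisfy c₁'/φ_n ≤ δ_{1,n}² ≤ c₁/φ_n and δ_{2,n}² ≤ c₂ n^{-ξ}. For each n let β_1, …, β_{p_n} be i.i.d. random variables drawn from the two-component normal mixture prior: t_j are i.i.d. with P(t_j = 1) = φ_n/p_n, P(t_j = 2) = 1 − φ_n/p_n, and given t_j, β_j ~ N(0, δ_{t_j,n}²). Let B_n = (1/p_n) Σ_{j=1}^{p_n} 1{|β_j| > C n^{-η/2}}. Then for every ζ > 0, P(|B_n − φ_n/p_n| > ζ φ_n/p_n) → 0 as n → ∞. -/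
open MeasureTheory ProbabilityTheory Filter Real
open scoped NNReal ENNReal Topology

/-!
Write `c_n = C n^{-η/2}` and `r_n = φ_n / p_n`. The indicators `1{|β_j| > c_n}` are i.i.d.
Bernoulli(`q_n`), so by Chebyshev the probability is at most `p_n q_n / (p_n ζ r_n / 2)²`,
which is `O(1/φ_n)` once `q_n = r_n (1 + o(1))`. Under the mixture law
`q_n = r_n G₁ + (1 - r_n) G₂`: the wide component `N(0, δ₁²)` gives the window `[-c_n, c_n]` mass
at most `2 c_n / √(2π δ₁²) = O(√(φ_n / n)) → 0` (its density is at most `1/√(2π δ₁²)`), and the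
narrow one has, by the Gaussian Chernoff bound, `G₂ ≤ 2 exp(-c_n² / (2δ₂²)) ≤
2 exp(-a n^{ξ-η}) = o(1/n) = o(r_n)`.
-/

lemma gaussianReal_real_Icc_le (μ : ℝ) {v : ℝ≥0} (hv : v ≠ 0) {a b : ℝ} (hab : a ≤ b) :
    (gaussianReal μ v).real (Set.Icc a b) ≤ (b - a) / √(2 * π * v) := by
  have hdensity : ∀ x ∈ Set.Icc a b, ‖gaussianPDFReal μ v x‖ ≤ (√(2 * π * v))⁻¹ := by
    intro x _
    rw [Real.norm_of_nonneg (gaussianPDFReal_nonneg _ _ _), gaussianPDFReal]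
    refine mul_le_of_le_one_right (by positivity) (exp_le_one_iff.2 ?_)
    exact div_nonpos_of_nonpos_of_nonneg (neg_nonpos.2 (sq_nonneg _)) (by positivity)
  calc (gaussianReal μ v).real (Set.Icc a b)
      = ∫ x in Set.Icc a b, gaussianPDFReal μ v x := by
        rw [measureReal_def, gaussianReal_apply_eq_integral μ hv,
          ENNReal.toReal_ofReal (setIntegral_nonneg measurableSet_Icc
            fun x _ => gaussianPDFReal_nonneg _ _ x)]
    _ ≤ (√(2 * π * v))⁻¹ * volume.real (Set.Icc a b) :=
        (Real.le_norm_self _).trans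
          (norm_setIntegral_le_of_norm_le_const measure_Icc_lt_top hdensity)
    _ = (b - a) / √(2 * π * v) := by
        rw [Real.volume_real_Icc_of_le hab]; ring

lemma tendsto_gaussianReal_real_abs_le {ι : Type*} {l : Filter ι} {v : ι → ℝ≥0} (hv : ∀ i, v i ≠ 0)
    {c : ι → ℝ} (hc : ∀ i, 0 ≤ c i) (hcv : Tendsto (fun i => c i ^ 2 / v i) l (𝓝 0)) :
    Tendsto (fun i => (gaussianReal 0 (v i)).real {x | c i < |x|}ᶜ) l (𝓝 0) := by
  have hbound : ∀ i, (gaussianReal 0 (v i)).real {x | c i < |x|}ᶜ ≤ √(2 / π * (c i ^ 2 / v i)) := by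
    intro i
    have hIcc : {x : ℝ | c i < |x|}ᶜ = Set.Icc (-c i) (c i) := by ext x; simp [abs_le]
    rw [hIcc]
    refine (gaussianReal_real_Icc_le 0 (hv i) (by linarith [hc i])).trans_eq ?_
    rw [← sqrt_sq (by linarith [hc i] : 0 ≤ c i - -c i), ← sqrt_div' _ (by positivity)]
    congr 1
    field_simp
    ring
  have hlim : Tendsto (fun i => √(2 / π * (c i ^ 2 / v i))) l (𝓝 0) := by
    simpa using (hcv.const_mul (2 / π)).sqrt
  exact squeeze_zero (fun i => measureReal_nonneg) hbound hlim

lemma gaussianReal_real_abs_gt_le (v : ℝ≥0) {c : ℝ} (hc : 0 ≤ c) :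
    (gaussianReal 0 v).real {x | c < |x|} ≤ 2 * exp (-c ^ 2 / (2 * v)) := by
  have hchernoff : -(c / v) * c + v * (c / v) ^ 2 / 2 = -c ^ 2 / (2 * v) := by
    rcases eq_or_ne (v : ℝ) 0 with hv | hv
    · simp [hv]
    · field_simp; ring
  have hupper := measure_ge_le_exp_mul_mgf (X := id) (μ := gaussianReal 0 v) c
    (t := c / v) (by positivity) (integrable_exp_mul_gaussianReal _)
  have hlower := measure_le_le_exp_mul_mgf (X := id) (μ := gaussianReal 0 v) (-c)
    (t := -(c / v)) (by simp only [neg_nonpos]; positivity) (integrable_exp_mul_gaussianReal _)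
  simp only [mgf_id_gaussianReal, id, neg_neg, even_two, Even.neg_pow, mul_neg, zero_mul,
    neg_zero, zero_add, ← neg_mul, ← exp_add, hchernoff] at hupper hlower
  calc (gaussianReal 0 v).real {x | c < |x|}
      ≤ (gaussianReal 0 v).real ({x | c ≤ x} ∪ {x | x ≤ -c}) := by
        refine measureReal_mono (fun x hx => ?_)
        simp only [Set.mem_ofPred_eq, Set.mem_union] at hx ⊢
        cases abs_cases x <;> [left; right] <;> linarith
    _ ≤ (gaussianReal 0 v).real {x | c ≤ x} + (gaussianReal 0 v).real {x | x ≤ -c} :=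
        measureReal_union_le _ _
    _ ≤ 2 * exp (-c ^ 2 / (2 * v)) := by
        linarith

lemma tendsto_mul_exp_neg_mul_rpow_atTop {a ε : ℝ} (ha : 0 < a) (hε : 0 < ε) :
    Tendsto (fun x : ℝ => x * exp (-a * x ^ ε)) atTop (𝓝 0) := by
  refine ((tendsto_rpow_mul_exp_neg_mul_atTop_nhds_zero ε⁻¹ a ha).comp
    (tendsto_rpow_atTop hε)).congr' ?_
  filter_upwards [eventually_ge_atTop 0] with x hx
  simp only [Function.comp_apply, rpow_rpow_inv hx hε.ne']

lemma tendsto_div_natCast_of_tendsto_mul_log_div {f : ℕ → ℝ} (hf : ∀ n, 0 ≤ f n)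
    (h : Tendsto (fun n : ℕ => f n * log n / n) atTop (𝓝 0)) :
    Tendsto (fun n : ℕ => f n / n) atTop (𝓝 0) := by
  refine squeeze_zero' (Eventually.of_forall fun n => div_nonneg (hf n) n.cast_nonneg) ?_ h
  filter_upwards [eventually_ge_atTop 3] with n hn
  have hlog : 1 ≤ log n := by
    rw [le_log_iff_exp_le (by positivity)]
    have hn' : (3 : ℝ) ≤ n := by exact_mod_cast hn
    linarith [exp_one_lt_d9]
  gcongr
  exact le_mul_of_one_le_right (hf n) hlog

lemma tendsto_div_div_natCast_of_tendsto_natCast_mul {G : ℕ → ℝ} (hG : ∀ n, 0 ≤ G n)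
    {p φ : ℕ → ℕ} {κ : ℝ} (hp : Tendsto (fun n => (p n : ℝ) / n) atTop (𝓝 κ))
    (hφ : ∀ n, 1 ≤ φ n) (h : Tendsto (fun n : ℕ => n * G n) atTop (𝓝 0)) :
    Tendsto (fun n => G n / ((φ n : ℝ) / p n)) atTop (𝓝 0) := by
  refine squeeze_zero' (Eventually.of_forall fun n => by have := hG n; positivity) ?_
    (by simpa using hp.mul h)
  filter_upwards [eventually_gt_atTop 0] with n hn
  have hn' : (n : ℝ) ≠ 0 := Nat.cast_ne_zero.2 hn.ne'
  calc G n / ((φ n : ℝ) / p n) = p n * G n / φ n := by rw [div_div_eq_mul_div, mul_comm]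
    _ ≤ p n * G n := div_le_self (by have := hG n; positivity) (Nat.one_le_cast.2 (hφ n))
    _ = p n / n * (n * G n) := by field_simp

lemma mul_rpow_neg_half_sq (C η : ℝ) {x : ℝ} (hx : 0 ≤ x) :
    (C * x ^ (-(η / 2))) ^ 2 = C ^ 2 * x ^ (-η) := by
  rw [mul_pow, ← rpow_mul_natCast hx]
  norm_num

lemma tendsto_gaussianReal_real_abs_le_of_le_var {C η c : ℝ} (hη : 1 ≤ η) (hC : 0 ≤ C) (hc : 0 < c)
    {φ : ℕ → ℝ} (hφ : ∀ n, 0 < φ n) (hφn : Tendsto (fun n => φ n / n) atTop (𝓝 0))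
    {v : ℕ → ℝ≥0} (hv : ∀ n, c / φ n ≤ v n) :
    Tendsto (fun n : ℕ => (gaussianReal 0 (v n)).real {x | C * (n : ℝ) ^ (-(η / 2)) < |x|}ᶜ)
      atTop (𝓝 0) := by
  have hv0 : ∀ n, (0 : ℝ) < v n := fun n => (div_pos hc (hφ n)).trans_le (hv n)
  refine tendsto_gaussianReal_real_abs_le (fun n => NNReal.coe_ne_zero.1 (hv0 n).ne')
    (fun n => by positivity) ?_
  refine squeeze_zero' (Eventually.of_forall fun n => by positivity)
    ?_ (by simpa using hφn.const_mul (C ^ 2 / c))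
  filter_upwards [eventually_ge_atTop 1] with n hn
  have hn' : (1 : ℝ) ≤ n := by exact_mod_cast hn
  have hpow : (n : ℝ) ^ (-η) ≤ 1 / n := by
    rw [one_div, ← rpow_neg_one]
    exact rpow_le_rpow_of_exponent_le hn' (by linarith)
  calc (C * (n : ℝ) ^ (-(η / 2))) ^ 2 / v n ≤ C ^ 2 * (1 / n) / (c / φ n) := by
        rw [mul_rpow_neg_half_sq C η n.cast_nonneg]
        gcongr
        exacts [div_pos hc (hφ n), hv n]
    _ = C ^ 2 / c * (φ n / n) := by field_simp

lemma tendsto_natCast_mul_gaussianReal_real_abs_gt_of_var_le {C η ξ c : ℝ} (hηξ : η < ξ)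
    (hC : 0 < C) (hc : 0 < c) {v : ℕ → ℝ≥0} (hv : ∀ n, v n ≠ 0)
    (hvle : ∀ n : ℕ, 1 ≤ n → (v n : ℝ) ≤ c * (n : ℝ) ^ (-ξ)) :
    Tendsto (fun n : ℕ => n * (gaussianReal 0 (v n)).real {x | C * (n : ℝ) ^ (-(η / 2)) < |x|})
      atTop (𝓝 0) := by
  set a := C ^ 2 / (2 * c) with ha
  have hlim : Tendsto (fun n : ℕ => 2 * (n * exp (-a * (n : ℝ) ^ (ξ - η)))) atTop (𝓝 0) := by
    simpa using ((tendsto_mul_exp_neg_mul_rpow_atTop (by positivity) (sub_pos.2 hηξ)).comp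
      tendsto_natCast_atTop_atTop).const_mul 2
  refine squeeze_zero' (Eventually.of_forall fun n => by positivity) ?_ hlim
  filter_upwards [eventually_ge_atTop 1] with n hn
  have hn' : (0 : ℝ) < n := by exact_mod_cast hn
  have hv0 : (0 : ℝ) < v n := NNReal.coe_pos.2 (pos_iff_ne_zero.2 (hv n))
  have hexponent : a * (n : ℝ) ^ (ξ - η) ≤ (C * (n : ℝ) ^ (-(η / 2))) ^ 2 / (2 * v n) := by
    rw [mul_rpow_neg_half_sq C η n.cast_nonneg]
    calc a * (n : ℝ) ^ (ξ - η) = C ^ 2 * (n : ℝ) ^ (-η) / (2 * (c * (n : ℝ) ^ (-ξ))) := by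
          rw [ha, sub_eq_add_neg, rpow_add hn', rpow_neg hn'.le ξ]
          field_simp
      _ ≤ C ^ 2 * (n : ℝ) ^ (-η) / (2 * v n) := by gcongr; exact hvle n hn
  calc (n : ℝ) * (gaussianReal 0 (v n)).real {x | C * (n : ℝ) ^ (-(η / 2)) < |x|}
      ≤ n * (2 * exp (-(C * (n : ℝ) ^ (-(η / 2))) ^ 2 / (2 * v n))) := by
        gcongr
        exact gaussianReal_real_abs_gt_le _ (by positivity)
    _ ≤ 2 * (n * exp (-a * (n : ℝ) ^ (ξ - η))) := by
        rw [mul_left_comm]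
        gcongr
        rw [neg_mul, neg_div]
        exact neg_le_neg hexponent

section Mixture

variable {α : Type*} [MeasurableSpace α] (ν₁ ν₂ : Measure α) [IsProbabilityMeasure ν₁]
  [IsProbabilityMeasure ν₂] {r : ℝ}

lemma isProbabilityMeasure_mixture (hr₀ : 0 ≤ r) (hr₁ : r ≤ 1) :
    IsProbabilityMeasure (ENNReal.ofReal r • ν₁ + ENNReal.ofReal (1 - r) • ν₂) :=
  ⟨by simp [← ENNReal.ofReal_add hr₀ (sub_nonneg.2 hr₁)]⟩

lemma abs_measureReal_mixture_sub_le (hr₀ : 0 ≤ r) (hr₁ : r ≤ 1) {S : Set α}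
    (hS : MeasurableSet S) :
    |(ENNReal.ofReal r • ν₁ + ENNReal.ofReal (1 - r) • ν₂).real S - r|
      ≤ r * ν₁.real Sᶜ + ν₂.real S := by
  rw [measureReal_add_apply (by simp [ENNReal.mul_eq_top])
    (by simp [ENNReal.mul_eq_top]), measureReal_ennreal_smul_apply,
    measureReal_ennreal_smul_apply, ENNReal.toReal_ofReal hr₀,
    ENNReal.toReal_ofReal (sub_nonneg.2 hr₁), probReal_compl_eq_one_sub hS]
  have h₁ : ν₁.real S ≤ 1 := measureReal_le_one
  have h₂ : ν₂.real S ≤ 1 := measureReal_le_one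
  rw [abs_le]
  constructor <;> nlinarith [measureReal_nonneg (μ := ν₂) (s := S)]

end Mixture

lemma tendsto_abs_measureReal_mixture_sub_div {ι α : Type*} {l : Filter ι} [MeasurableSpace α]
    {ν₁ ν₂ : ι → Measure α} [∀ i, IsProbabilityMeasure (ν₁ i)] [∀ i, IsProbabilityMeasure (ν₂ i)]
    {r : ι → ℝ} (hr₀ : ∀ i, 0 < r i) (hr₁ : ∀ i, r i ≤ 1) {S : ι → Set α}
    (hS : ∀ i, MeasurableSet (S i)) (h₁ : Tendsto (fun i => (ν₁ i).real (S i)ᶜ) l (𝓝 0))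
    (h₂ : Tendsto (fun i => (ν₂ i).real (S i) / r i) l (𝓝 0)) :
    Tendsto (fun i => |(ENNReal.ofReal (r i) • ν₁ i + ENNReal.ofReal (1 - r i) • ν₂ i).real (S i)
      - r i| / r i) l (𝓝 0) := by
  refine squeeze_zero (fun i => div_nonneg (abs_nonneg _) (hr₀ i).le) (fun i => ?_)
    (by simpa using h₁.add h₂)
  rw [div_le_iff₀ (hr₀ i), add_mul, div_mul_cancel₀ _ (hr₀ i).ne', mul_comm]
  exact abs_measureReal_mixture_sub_le _ _ (hr₀ i).le (hr₁ i) (hS i)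

lemma measure_abs_sum_indicator_sub_ge_le {ι Ω : Type*} [Fintype ι] [MeasurableSpace Ω]
    {P : Measure Ω} [IsProbabilityMeasure P] {X : ι → Ω → ℝ} (hindep : iIndepFun X P)
    {μ : Measure ℝ} [IsProbabilityMeasure μ] (hlaw : ∀ i, P.map (X i) = μ)
    {S : Set ℝ} (hS : MeasurableSet S) {t : ℝ} (ht : 0 < t) :
    P {ω | t ≤ |∑ i, S.indicator 1 (X i ω) - Fintype.card ι * μ.real S|}
      ≤ ENNReal.ofReal (Fintype.card ι * μ.real S / t ^ 2) := by
  set Y : ι → Ω → ℝ := fun i => S.indicator 1 ∘ X i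
  have hind : Measurable (S.indicator (1 : ℝ → ℝ)) := measurable_one.indicator hS
  have hX : ∀ i, AEMeasurable (X i) P := fun i =>
    AEMeasurable.of_map_ne_zero (by rw [hlaw]; exact IsProbabilityMeasure.ne_zero μ)
  have hYmeas : ∀ i, AEStronglyMeasurable (Y i) P := fun i =>
    (hind.comp_aemeasurable (hX i)).aestronglyMeasurable
  have hYmem : ∀ i, MemLp (Y i) 2 P := fun i =>
    memLp_of_bounded (a := 0) (b := 1) (ae_of_all _ fun ω => by
      by_cases h : X i ω ∈ S <;> simp [Y, h]) (hYmeas i) 2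
  have hYmean : ∀ i, P[Y i] = μ.real S := fun i => by
    calc P[Y i] = ∫ x, S.indicator 1 x ∂(P.map (X i)) :=
          (integral_map (hX i) hind.aestronglyMeasurable).symm
      _ = μ.real S := by rw [hlaw, integral_indicator_one hS]
  have hYsq : ∀ i ω, Y i ω ^ 2 = Y i ω := fun i ω => by
    by_cases h : X i ω ∈ S <;> simp [Y, h]
  have hvar : Var[∑ i, Y i; P] ≤ Fintype.card ι * μ.real S := by
    rw [IndepFun.variance_sum (fun i _ => hYmem i)
      (fun i _ j _ hij => (hindep.comp _ fun _ => hind).indepFun hij)]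
    calc ∑ i, Var[Y i; P] ≤ ∑ i : ι, μ.real S := Finset.sum_le_sum fun i _ =>
          (variance_le_expectation_sq (hYmeas i)).trans_eq
            (by simp only [Pi.pow_apply, hYsq, hYmean])
      _ = Fintype.card ι * μ.real S := by simp
  have hmean : P[∑ i, Y i] = Fintype.card ι * μ.real S := by
    simp only [Finset.sum_apply]
    rw [integral_finsetSum _ fun i _ => (hYmem i).integrable one_le_two]
    simp [hYmean]
  calc P {ω | t ≤ |∑ i, S.indicator 1 (X i ω) - Fintype.card ι * μ.real S|}
      = P {ω | t ≤ |(∑ i, Y i) ω - P[∑ i, Y i]|} := by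
        rw [hmean]; simp only [Finset.sum_apply]; rfl
    _ ≤ ENNReal.ofReal (Var[∑ i, Y i; P] / t ^ 2) :=
        meas_ge_le_variance_div_sq (memLp_finsetSum' _ fun i _ => hYmem i) ht
    _ ≤ ENNReal.ofReal (Fintype.card ι * μ.real S / t ^ 2) := by gcongr

lemma measure_abs_mean_indicator_sub_gt_le {ι Ω : Type*} [Fintype ι] [Nonempty ι]
    [MeasurableSpace Ω] {P : Measure Ω} [IsProbabilityMeasure P] {X : ι → Ω → ℝ}
    (hindep : iIndepFun X P) {μ : Measure ℝ} [IsProbabilityMeasure μ]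
    (hlaw : ∀ i, P.map (X i) = μ) {S : Set ℝ} (hS : MeasurableSet S) {r ζ : ℝ} (hr : 0 < r)
    (hζ : 0 < ζ) (hμS : |μ.real S - r| ≤ ζ * r / 2) :
    P {ω | ζ * r < |1 / Fintype.card ι * ∑ i, S.indicator 1 (X i ω) - r|}
      ≤ ENNReal.ofReal ((4 + 2 * ζ) / (ζ ^ 2 * (Fintype.card ι * r))) := by
  set m : ℝ := (Fintype.card ι : ℝ)
  have hm : 0 < m := Nat.cast_pos.2 Fintype.card_pos
  calc P {ω | ζ * r < |1 / m * ∑ i, S.indicator 1 (X i ω) - r|}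
      ≤ P {ω | m * (ζ * r / 2) ≤ |∑ i, S.indicator 1 (X i ω) - m * μ.real S|} := by
        refine measure_mono fun ω hω => ?_
        simp only [Set.mem_ofPred_eq] at hω ⊢
        have hsplit : |1 / m * ∑ i, S.indicator 1 (X i ω) - r|
            ≤ |∑ i, S.indicator 1 (X i ω) - m * μ.real S| / m + |μ.real S - r| := by
          calc _ = |(∑ i, S.indicator 1 (X i ω) - m * μ.real S) / m + (μ.real S - r)| := by
                congr 1; field_simp; ring
            _ ≤ _ := (abs_add_le _ _).trans_eq (by rw [abs_div, abs_of_pos hm])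
        rw [← le_div_iff₀' hm]
        linarith
    _ ≤ ENNReal.ofReal (m * μ.real S / (m * (ζ * r / 2)) ^ 2) :=
        measure_abs_sum_indicator_sub_ge_le hindep hlaw hS (by positivity)
    _ ≤ ENNReal.ofReal ((4 + 2 * ζ) / (ζ ^ 2 * (m * r))) := by
        refine ENNReal.ofReal_le_ofReal ?_
        have hq : μ.real S ≤ r * (1 + ζ / 2) := by linarith [(abs_le.1 hμS).2]
        rw [div_le_div_iff₀ (by positivity) (by positivity)]
        calc m * μ.real S * (ζ ^ 2 * (m * r)) ≤ m * (r * (1 + ζ / 2)) * (ζ ^ 2 * (m * r)) := by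
              gcongr
          _ = (4 + 2 * ζ) * (m * (ζ * r / 2)) ^ 2 := by ring

theorem proportion_of_large_coefficients_concentrates_general
    {Ω : Type*} [MeasurableSpace Ω] (P : Measure Ω) [IsProbabilityMeasure P]
    (κ ξ η C c₁' c₂ : ℝ)
    (hη₁ : 1 ≤ η) (hηξ : η < ξ)
    (hC : 0 < C) (hc₁' : 0 < c₁') (hc₂ : 0 < c₂)
    (p φ : ℕ → ℕ)
    (hpκ : Tendsto (fun n => (p n : ℝ) / (n : ℝ)) atTop (nhds κ))
    (hφ₁ : ∀ n, 1 ≤ φ n) (hφp : ∀ n, φ n ≤ p n)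
    (hφtop : Tendsto (fun n => (φ n : ℝ)) atTop atTop)
    (hφlog : Tendsto (fun n => (φ n : ℝ) * Real.log n / (n : ℝ)) atTop (nhds 0))
    (δ₁ δ₂ : ℕ → ℝ) (hδ₂pos : ∀ n, 0 < δ₂ n)
    (hδ₁lb : ∀ n, c₁' / (φ n : ℝ) ≤ δ₁ n ^ 2)
    (hδ₂ub : ∀ n : ℕ, 1 ≤ n → δ₂ n ^ 2 ≤ c₂ * (n : ℝ) ^ (-ξ))
    (β : (n : ℕ) → Fin (p n) → Ω → ℝ)
    (hindep : ∀ n, iIndepFun (β n) P)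
    (hlaw : ∀ n (j : Fin (p n)), Measure.map (β n j) P
      = ENNReal.ofReal ((φ n : ℝ) / (p n : ℝ))
          • gaussianReal 0 (Real.toNNReal (δ₁ n ^ 2))
        + ENNReal.ofReal (1 - (φ n : ℝ) / (p n : ℝ))
          • gaussianReal 0 (Real.toNNReal (δ₂ n ^ 2)))
    (B : (n : ℕ) → Ω → ℝ)
    (hB : ∀ n ω, B n ω
      = (1 / (p n : ℝ)) * ∑ j, if C * (n : ℝ) ^ (-(η / 2)) < |β n j ω| then (1:ℝ) else 0) :
    ∀ ζ : ℝ, 0 < ζ →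
      Tendsto
        (fun n => P {ω | ζ * ((φ n : ℝ) / (p n : ℝ)) < |B n ω - (φ n : ℝ) / (p n : ℝ)|})
        atTop (nhds 0) := by
  intro ζ hζ
  set S : ℕ → Set ℝ := fun n => {x | C * (n : ℝ) ^ (-(η / 2)) < |x|}
  set r : ℕ → ℝ := fun n => (φ n : ℝ) / (p n : ℝ)
  have hφ₀ : ∀ n, (0 : ℝ) < φ n := fun n => Nat.cast_pos.2 (hφ₁ n)
  have hp₀ : ∀ n, (0 : ℝ) < p n := fun n => (hφ₀ n).trans_le (Nat.cast_le.2 (hφp n))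
  have hr₀ : ∀ n, 0 < r n := fun n => div_pos (hφ₀ n) (hp₀ n)
  have hr₁ : ∀ n, r n ≤ 1 := fun n => div_le_one_of_le₀ (Nat.cast_le.2 (hφp n)) (hp₀ n).le
  have hS : ∀ n, MeasurableSet (S n) := fun n =>
    measurableSet_lt measurable_const continuous_abs.measurable
  have hspike := tendsto_gaussianReal_real_abs_le_of_le_var hη₁ hC.le hc₁' hφ₀
    (tendsto_div_natCast_of_tendsto_mul_log_div (fun n => (hφ₀ n).le) hφlog)
    (v := fun n => (δ₁ n ^ 2).toNNReal) (fun n => (hδ₁lb n).trans (Real.le_coe_toNNReal _))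
  have hslab := tendsto_div_div_natCast_of_tendsto_natCast_mul (fun n => measureReal_nonneg) hpκ
    hφ₁ (tendsto_natCast_mul_gaussianReal_real_abs_gt_of_var_le hηξ hC hc₂
      (v := fun n => (δ₂ n ^ 2).toNNReal) (fun n => by simpa using (hδ₂pos n).ne')
      (fun n hn => (Real.coe_toNNReal _ (sq_nonneg _)).trans_le (hδ₂ub n hn)))
  have hnear := (tendsto_abs_measureReal_mixture_sub_div hr₀ hr₁ hS hspike hslab).eventually
    (gt_mem_nhds (half_pos hζ))
  have hbound : ∀ᶠ n in atTop, P {ω | ζ * r n < |B n ω - r n|}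
      ≤ ENNReal.ofReal ((4 + 2 * ζ) / (ζ ^ 2 * (p n * r n))) := by
    filter_upwards [hnear] with n hn
    have := isProbabilityMeasure_mixture (gaussianReal 0 (δ₁ n ^ 2).toNNReal)
      (gaussianReal 0 (δ₂ n ^ 2).toNNReal) (hr₀ n).le (hr₁ n)
    have : Nonempty (Fin (p n)) := ⟨⟨0, Nat.cast_pos.1 (hp₀ n)⟩⟩
    have hBS : ∀ ω, B n ω = 1 / (p n : ℝ) * ∑ j, (S n).indicator 1 (β n j ω) := fun ω => by
      simp [hB, Set.indicator_apply, S]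
    rw [div_lt_iff₀ (hr₀ n)] at hn
    simpa only [hBS, Fintype.card_fin] using
      measure_abs_mean_indicator_sub_gt_le (hindep n) (hlaw n) (hS n) (hr₀ n) hζ (by linarith)
  have hpr : ∀ n, (p n : ℝ) * r n = φ n := fun n => mul_div_cancel₀ _ (hp₀ n).ne'
  refine tendsto_of_tendsto_of_tendsto_of_le_of_le' tendsto_const_nhds ?_
    (Eventually.of_forall fun n => zero_le) hbound
  simpa [hpr] using ENNReal.tendsto_ofReal
    (tendsto_const_nhds.div_atTop (hφtop.const_mul_atTop (by positivity)))

/-- Lemma 1 of the paper. Fix `κ ∈ (0,1)`, `ξ > 1`, `1 ≤ η < ξ`, `C > 0` and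
`0 < c₁' ≤ c₁`, `c₂ > 0`. Let `p n / n → κ`, `1 ≤ φ n ≤ p n`, `φ n → ∞`,
`(φ n · log n)/n → 0`, and let `δ₁ n, δ₂ n > 0` satisfy `c₁'/φ n ≤ δ₁ n ² ≤ c₁/φ n` and
`δ₂ n ² ≤ c₂ n^{-ξ}`. For each `n`, let `β n 1, …, β n (p n)` be i.i.d. from the two-component
normal mixture prior (variance `δ₁ n ²` with probability `φ n / p n`, else variance `δ₂ n ²`),
and let `B n = (1/p n) ∑_j 1{|β n j| > C n^{-η/2}}`. Then for every `ζ > 0`,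
`P(|B n − φ n / p n| > ζ φ n / p n) → 0`. -/
theorem proportion_of_large_coefficients_concentrates
    {Ω : Type*} [MeasurableSpace Ω] (P : Measure Ω) [IsProbabilityMeasure P]
    (κ ξ η C c₁' c₁ c₂ : ℝ)
    (hκ : κ ∈ Set.Ioo (0:ℝ) 1) (hξ : 1 < ξ) (hη₁ : 1 ≤ η) (hηξ : η < ξ)
    (hC : 0 < C) (hc₁' : 0 < c₁') (hc₁ : c₁' ≤ c₁) (hc₂ : 0 < c₂)
    (p φ : ℕ → ℕ) (hp : ∀ n, 0 < p n)
    (hpκ : Tendsto (fun n => (p n : ℝ) / (n : ℝ)) atTop (nhds κ))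
    (hφ₁ : ∀ n, 1 ≤ φ n) (hφp : ∀ n, φ n ≤ p n)
    (hφtop : Tendsto (fun n => (φ n : ℝ)) atTop atTop)
    (hφlog : Tendsto (fun n => (φ n : ℝ) * Real.log n / (n : ℝ)) atTop (nhds 0))
    (δ₁ δ₂ : ℕ → ℝ) (hδ₁pos : ∀ n, 0 < δ₁ n) (hδ₂pos : ∀ n, 0 < δ₂ n)
    (hδ₁lb : ∀ n, c₁' / (φ n : ℝ) ≤ δ₁ n ^ 2) (hδ₁ub : ∀ n, δ₁ n ^ 2 ≤ c₁ / (φ n : ℝ))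
    (hδ₂ub : ∀ n : ℕ, 1 ≤ n → δ₂ n ^ 2 ≤ c₂ * (n : ℝ) ^ (-ξ))
    (β : (n : ℕ) → Fin (p n) → Ω → ℝ)
    (hindep : ∀ n, iIndepFun (β n) P)
    (hlaw : ∀ n (j : Fin (p n)), Measure.map (β n j) P
      = ENNReal.ofReal ((φ n : ℝ) / (p n : ℝ))
          • gaussianReal 0 (Real.toNNReal (δ₁ n ^ 2))
        + ENNReal.ofReal (1 - (φ n : ℝ) / (p n : ℝ))
          • gaussianReal 0 (Real.toNNReal (δ₂ n ^ 2)))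
    (B : (n : ℕ) → Ω → ℝ)
    (hB : ∀ n ω, B n ω
      = (1 / (p n : ℝ)) * ∑ j, if C * (n : ℝ) ^ (-(η / 2)) < |β n j ω| then (1:ℝ) else 0) :
    ∀ ζ : ℝ, 0 < ζ →
      Tendsto
        (fun n => P {ω | ζ * ((φ n : ℝ) / (p n : ℝ)) < |B n ω - (φ n : ℝ) / (p n : ℝ)|})
        atTop (nhds 0) :=
  proportion_of_large_coefficients_concentrates_general P κ ξ η C c₁' c₂ hη₁ hηξ hC hc₁' hc₂ p φ hpκ
    hφ₁ hφp hφtop hφlog δ₁ δ₂ hδ₂pos hδ₁lb hδ₂ub β hindep hlaw B hB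
end

section
/- Let f = e^ℓ be a probability density function on ℝ such that ℓ is concave, differentiable, and symmetric (ℓ(−x) = ℓ(x) for all x). If ε is a random variable with density f, then ℓ(ε) is integrable and E|ℓ(ε) − ℓ(0)| ≤ 2. -/
/-!
Since `ℓ` is even and concave it peaks at `0`, so `|ℓ x - ℓ 0| = ℓ 0 - ℓ x`. The elementary
inequality `s ≤ exp (s / 2)` gives `(ℓ 0 - ℓ x) e^{ℓ x} ≤ e^{(ℓ 0 + ℓ x) / 2}`, and midpoint
concavity bounds this by `e^{ℓ (x / 2)}`, whose integral is `2 ∫ e^ℓ = 2`.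
-/

open MeasureTheory Real

lemma le_exp_half (x : ℝ) : x ≤ exp (x / 2) := by
  rcases le_or_gt x 0 with hx | hx
  · exact hx.trans (exp_pos _).le
  · have hquarter : x / 4 + 1 ≤ exp (x / 4) := add_one_le_exp _
    have hsq : exp (x / 2) = exp (x / 4) * exp (x / 4) := by rw [← exp_add]; ring_nf
    nlinarith [mul_le_mul hquarter hquarter (by positivity) (exp_pos _).le, sq_nonneg (x / 4 - 1)]

lemma sub_mul_exp_le_exp_add_div_two (s t : ℝ) : (s - t) * exp t ≤ exp ((s + t) / 2) :=
  calc (s - t) * exp t ≤ exp ((s - t) / 2) * exp t := by gcongr; exact le_exp_half _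
    _ = exp ((s + t) / 2) := by rw [← exp_add]; ring_nf

namespace ConcaveOn

section Midpoint

variable {E : Type*} [AddCommGroup E] [Module ℝ E] {ℓ : E → ℝ}

lemma add_div_two_le_apply_inv_two_smul_add (hℓ : ConcaveOn ℝ Set.univ ℓ) (x y : E) :
    (ℓ x + ℓ y) / 2 ≤ ℓ ((2 : ℝ)⁻¹ • (x + y)) := by
  have h := hℓ.2 (Set.mem_univ x) (Set.mem_univ y) (by norm_num : (0 : ℝ) ≤ 2⁻¹)
    (by norm_num : (0 : ℝ) ≤ 2⁻¹) (by norm_num)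
  rw [smul_add]
  simp only [smul_eq_mul] at h
  linarith

lemma apply_le_apply_zero_of_even (hℓ : ConcaveOn ℝ Set.univ ℓ) (heven : ℓ.Even) (x : E) :
    ℓ x ≤ ℓ 0 := by
  have h := hℓ.add_div_two_le_apply_inv_two_smul_add x (-x)
  rw [add_neg_cancel, smul_zero, heven] at h
  linarith

end Midpoint

variable {ℓ : ℝ → ℝ}

lemma exp_mul_abs_sub_apply_zero_le (hℓ : ConcaveOn ℝ Set.univ ℓ) (heven : ℓ.Even) (x : ℝ) :
    exp (ℓ x) * |ℓ x - ℓ 0| ≤ exp (ℓ (x / 2)) := by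
  have hmid : (ℓ 0 + ℓ x) / 2 ≤ ℓ (x / 2) := by
    simpa [div_eq_inv_mul] using hℓ.add_div_two_le_apply_inv_two_smul_add 0 x
  rw [abs_sub_comm, abs_of_nonneg (sub_nonneg.2 (hℓ.apply_le_apply_zero_of_even heven x)),
    mul_comm]
  exact (sub_mul_exp_le_exp_add_div_two _ _).trans (exp_le_exp.2 hmid)

lemma integrable_exp_mul_abs_sub_apply_zero (hℓ : ConcaveOn ℝ Set.univ ℓ) (heven : ℓ.Even)
    (hint : Integrable fun x => exp (ℓ x)) :
    Integrable fun x => exp (ℓ x) * |ℓ x - ℓ 0| := by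
  have hcont : Continuous ℓ := hℓ.locallyLipschitz.continuous
  refine (hint.comp_div two_ne_zero).mono' (by fun_prop) (ae_of_all _ fun x => ?_)
  rw [Real.norm_of_nonneg (by positivity)]
  exact hℓ.exp_mul_abs_sub_apply_zero_le heven x

lemma integral_exp_mul_abs_sub_apply_zero_le (hℓ : ConcaveOn ℝ Set.univ ℓ) (heven : ℓ.Even)
    (hint : Integrable fun x => exp (ℓ x)) :
    ∫ x, exp (ℓ x) * |ℓ x - ℓ 0| ≤ 2 * ∫ x, exp (ℓ x) :=
  calc ∫ x, exp (ℓ x) * |ℓ x - ℓ 0| ≤ ∫ x, exp (ℓ (x / 2)) :=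
        integral_mono (hℓ.integrable_exp_mul_abs_sub_apply_zero heven hint)
          (hint.comp_div two_ne_zero) (hℓ.exp_mul_abs_sub_apply_zero_le heven)
    _ = 2 * ∫ x, exp (ℓ x) := by simp [Measure.integral_comp_div (fun y => exp (ℓ y))]

end ConcaveOn

section Density

variable {Ω α : Type*} [MeasurableSpace Ω] [MeasurableSpace α] {P : Measure Ω} {μ : Measure α}
  {X : Ω → α} {ρ g : α → ℝ}

lemma integrable_comp_iff_of_map_eq_withDensity (hX : AEMeasurable X P) (hρ : Measurable ρ)
    (hρ_nonneg : 0 ≤ ρ) (hg : Measurable g)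
    (hmap : P.map X = μ.withDensity fun x => ENNReal.ofReal (ρ x)) :
    Integrable (fun ω => g (X ω)) P ↔ Integrable (fun x => ρ x * g x) μ := by
  change Integrable (g ∘ X) P ↔ _
  rw [← integrable_map_measure hg.aestronglyMeasurable hX, hmap,
    integrable_withDensity_iff_integrable_smul' (by fun_prop)
      (ae_of_all _ fun _ => ENNReal.ofReal_lt_top)]
  simp [ENNReal.toReal_ofReal (hρ_nonneg _)]

lemma integral_comp_eq_of_map_eq_withDensity (hX : AEMeasurable X P) (hρ : Measurable ρ)
    (hρ_nonneg : 0 ≤ ρ) (hg : Measurable g)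
    (hmap : P.map X = μ.withDensity fun x => ENNReal.ofReal (ρ x)) :
    ∫ ω, g (X ω) ∂P = ∫ x, ρ x * g x ∂μ := by
  rw [← integral_map hX hg.aestronglyMeasurable, hmap,
    integral_withDensity_eq_integral_toReal_smul (by fun_prop)
      (ae_of_all _ fun _ => ENNReal.ofReal_lt_top)]
  simp [ENNReal.toReal_ofReal (hρ_nonneg _)]

end Density

theorem logconcave_density_deviation_bound_general
    {Ω : Type*} [MeasurableSpace Ω] (P : Measure Ω) [IsProbabilityMeasure P]
    (ℓ : ℝ → ℝ)
    (hconc : ConcaveOn ℝ Set.univ ℓ)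
    (hsymm : ∀ x, ℓ (-x) = ℓ x)
    (hdens : ∫ x, Real.exp (ℓ x) = 1)
    (ε : Ω → ℝ)
    (hε : Measure.map ε P
      = volume.withDensity (fun x => ENNReal.ofReal (Real.exp (ℓ x)))) :
    Integrable (fun ω => ℓ (ε ω)) P ∧ ∫ ω, |ℓ (ε ω) - ℓ 0| ∂P ≤ 2 := by
  have hℓ : Measurable ℓ := hconc.locallyLipschitz.continuous.measurable
  have hexp : Integrable fun x => exp (ℓ x) := Integrable.of_integral_ne_zero (by simp [hdens])
  have hε_meas : AEMeasurable ε P := AEMeasurable.of_map_ne_zero <| by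
    rw [hε, Ne, withDensity_eq_zero_iff (by fun_prop)]
    simpa [Filter.EventuallyEq, exp_pos] using NeZero.ne volume
  have hexp_nonneg : 0 ≤ fun x => exp (ℓ x) := fun _ => (exp_pos _).le
  have hdev_meas : Measurable fun x => |ℓ x - ℓ 0| := by fun_prop
  have hdev : Integrable (fun ω => |ℓ (ε ω) - ℓ 0|) P :=
    (integrable_comp_iff_of_map_eq_withDensity hε_meas (by fun_prop) hexp_nonneg hdev_meas hε).2
      (hconc.integrable_exp_mul_abs_sub_apply_zero hsymm hexp)
  refine ⟨?_, ?_⟩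
  · have hsub := (integrable_norm_iff ((hℓ.comp_aemeasurable hε_meas).sub_const (ℓ 0)
      |>.aestronglyMeasurable)).1 hdev
    exact (hsub.add (integrable_const (ℓ 0))).congr (ae_of_all _ fun ω => by simp)
  · rw [integral_comp_eq_of_map_eq_withDensity hε_meas (by fun_prop) hexp_nonneg hdev_meas hε]
    simpa [hdens] using hconc.integral_exp_mul_abs_sub_apply_zero_le hsymm hexp

/-- Let `f = exp ∘ ℓ` be a probability density on `ℝ` with `ℓ` concave,
differentiable and symmetric. If `ε` is a random variable with density `f`, then `ℓ(ε)` is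
integrable and `E|ℓ(ε) − ℓ(0)| ≤ 2`. -/
theorem logconcave_density_deviation_bound
    {Ω : Type*} [MeasurableSpace Ω] (P : Measure Ω) [IsProbabilityMeasure P]
    (ℓ : ℝ → ℝ)
    (hconc : ConcaveOn ℝ Set.univ ℓ)
    (hdiff : Differentiable ℝ ℓ)
    (hsymm : ∀ x, ℓ (-x) = ℓ x)
    (hdens : ∫ x, Real.exp (ℓ x) = 1)
    (ε : Ω → ℝ)
    (hε : Measure.map ε P
      = volume.withDensity (fun x => ENNReal.ofReal (Real.exp (ℓ x)))) :
    Integrable (fun ω => ℓ (ε ω)) P ∧ ∫ ω, |ℓ (ε ω) - ℓ 0| ∂P ≤ 2 :=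
  logconcave_density_deviation_bound_general P ℓ hconc hsymm hdens ε hε
end
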